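/- arXiv:1509.03728 — 4 statements merged into one kernel-verified Lean document; each statement's English description precedes it below -/
import Mathlib

section
/- For every natural number n ≥ 1, the product (⌊n/2⌋+1)(⌊n/2⌋+2)···n can be written as 2^(⌊n/2⌋) · k for some odd positive integer k. -/
/-!
Since `(2m)! = (2m)‼ (2m-1)‼ = 2^m m! (2m-1)‼`, the product `(m+1)(m+2)⋯(2m) = (2m)!/m!`
equals `2^m (2m-1)‼`, and for `n = 2m+1` the extra factor `2m+1` turns it into `2^m (2m+1)‼`.
Odd double factorials are odd. (At `m = 0` the truncated `2m-1` is `0`, and `0‼ = 1` is still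
the right value.)
-/

open Finset Nat

namespace Nat

theorem factorial_mul_prod_Ioc {m n : ℕ} (h : m ≤ n) : m ! * ∏ i ∈ Ioc m n, i = n ! := by
  induction n, h using Nat.le_induction with
  | base => simp
  | succ n hmn ih =>
    rw [prod_Ioc_succ_top (by omega), ← mul_assoc, ih, factorial_succ, mul_comm]

theorem odd_doubleFactorial_two_mul_sub_one : ∀ m : ℕ, Odd (2 * m - 1)‼
  | 0 => odd_one
  | m + 1 => by
    rw [show 2 * (m + 1) - 1 = 2 * m + 1 by omega, doubleFactorial_add_one]
    exact (odd_two_mul_add_one m).mul (odd_doubleFactorial_two_mul_sub_one m)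

theorem factorial_two_mul_eq : ∀ m : ℕ, (2 * m)! = 2 ^ m * m ! * (2 * m - 1)‼
  | 0 => rfl
  | m + 1 => by
    rw [show 2 * (m + 1) = 2 * m + 1 + 1 by ring, factorial_eq_mul_doubleFactorial,
      show 2 * m + 1 + 1 = 2 * (m + 1) by ring, doubleFactorial_two_mul,
      show 2 * (m + 1) - 1 = 2 * m + 1 by omega]

theorem prod_Ioc_two_mul (m : ℕ) : ∏ i ∈ Ioc m (2 * m), i = 2 ^ m * (2 * m - 1)‼ := by
  apply mul_left_cancel₀ (factorial_ne_zero m)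
  rw [factorial_mul_prod_Ioc (by omega), factorial_two_mul_eq]
  ring

theorem prod_Ioc_two_mul_add_one (m : ℕ) :
    ∏ i ∈ Ioc m (2 * m + 1), i = 2 ^ m * (2 * m + 1)‼ := by
  rw [prod_Ioc_succ_top (by omega), prod_Ioc_two_mul, doubleFactorial_add_one]
  ring

end Nat

theorem stmt_2_general (n : ℕ) :
    ∃ k : ℕ, 0 < k ∧ Odd k ∧
      ∏ i ∈ Finset.Icc (n / 2 + 1) n, i = 2 ^ (n / 2) * k := by
  rw [Icc_add_one_left_eq_Ioc]
  obtain ⟨m, rfl | rfl⟩ := even_or_odd' n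
  · refine ⟨(2 * m - 1)‼, doubleFactorial_pos _, odd_doubleFactorial_two_mul_sub_one m, ?_⟩
    rw [Nat.mul_div_cancel_left m two_pos, prod_Ioc_two_mul]
  · refine ⟨(2 * m + 1)‼, doubleFactorial_pos _,
      odd_doubleFactorial_two_mul_sub_one (m + 1), ?_⟩
    rw [show (2 * m + 1) / 2 = m by omega, prod_Ioc_two_mul_add_one]

theorem stmt_2 (n : ℕ) (hn : 1 ≤ n) :
    ∃ k : ℕ, 0 < k ∧ Odd k ∧
      ∏ i ∈ Finset.Icc (n / 2 + 1) n, i = 2 ^ (n / 2) * k :=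
  stmt_2_general n
end

section
/- If (ε, π) ∈ Z/2 ≀ S_n has εᵢ = 1 for all i, then the number of orbits of the image permutation σ on Fin n × Z/2 is congruent to n modulo 2 (even when n is even, odd when n is odd). -/
/-!
Projecting to the first coordinate maps the orbits of `σ` onto the cycles of `π`. Over a cycle
of `π` of length `k` through `x`, the points `(x, 0)` and `(x, 1)` lie in one orbit of `σ`
exactly when `k` is odd, since `σ ^ m (x, 0) = ((π ^ m) x, m)`. So the cycle carries one orbit
of `σ` if `k` is odd and two if `k` is even, in either case `k` modulo `2`, and the lengths of
the cycles of `π` add up to `n`.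
-/

open MulAction Function

namespace Equiv.Perm

variable {α : Type*}

abbrev Orbits (f : Perm α) : Type _ := orbitRel.Quotient (Subgroup.zpowers f) α

theorem orbitRel_zpowers_iff [Finite α] {f : Perm α} {x y : α} :
    orbitRel (Subgroup.zpowers f) α x y ↔ ∃ m : ℕ, (f ^ m) y = x := by
  rw [orbitRel_apply, mem_orbit_iff]
  constructor
  · rintro ⟨⟨g, hg⟩, rfl⟩
    obtain ⟨m, rfl⟩ := (isOfFinOrder_of_finite f).mem_powers_iff_mem_zpowers.mpr hg
    exact ⟨m, rfl⟩
  · rintro ⟨m, rfl⟩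
    exact ⟨⟨f ^ m, Subgroup.npow_mem_zpowers f m⟩, rfl⟩

theorem card_eq_sum_minimalPeriod [Finite α] (f : Perm α) [Fintype (Orbits f)] :
    Nat.card α = ∑ q : Orbits f, minimalPeriod f q.out := by
  rw [Nat.card_congr (selfEquivSigmaOrbits (Subgroup.zpowers f) α), Nat.card_sigma]
  refine Finset.sum_congr rfl fun q _ => ?_
  rw [Nat.card_congr (orbitZPowersEquiv f q.out), Nat.card_zmod]
  rfl

def flipLift (f : Perm α) : Perm (α × ZMod 2) :=
  f.prodCongr (Equiv.addRight 1)

@[simp]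
theorem flipLift_apply (f : Perm α) (p : α × ZMod 2) : flipLift f p = (f p.1, p.2 + 1) := rfl

theorem flipLift_pow_apply (f : Perm α) (m : ℕ) (p : α × ZMod 2) :
    (flipLift f ^ m) p = ((f ^ m) p.1, p.2 + m) := by
  induction m with
  | zero => simp
  | succ m ih => simp [pow_succ', ih, add_assoc]

section Finite

variable [Finite α] (f : Perm α)

theorem orbitRel_flipLift_iff {x y : α} {b c : ZMod 2} :
    orbitRel (Subgroup.zpowers (flipLift f)) _ (x, b) (y, c) ↔
      ∃ m : ℕ, (f ^ m) y = x ∧ c + m = b := by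
  simp only [orbitRel_zpowers_iff, flipLift_pow_apply, Prod.ext_iff]

theorem orbitRel_flipLift_iff_of_fst_eq (x : α) (b c : ZMod 2) :
    orbitRel (Subgroup.zpowers (flipLift f)) _ (x, b) (x, c) ↔
      b = c ∨ Odd (minimalPeriod f x) := by
  simp only [orbitRel_flipLift_iff, coe_pow]
  constructor
  · rintro ⟨m, hdvd, hm⟩
    rcases Nat.even_or_odd m with hm2 | hm2
    · left
      rw [← hm, ZMod.natCast_eq_zero_iff_even.mpr hm2, add_zero]
    · exact .inr (hm2.of_dvd_nat (isPeriodicPt_iff_minimalPeriod_dvd.mp hdvd))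
  · rintro (rfl | hodd)
    · exact ⟨0, isPeriodicPt_zero f x, by simp⟩
    rcases eq_or_ne b c with rfl | hbc
    · exact ⟨0, isPeriodicPt_zero f x, by simp⟩
    refine ⟨minimalPeriod f x, isPeriodicPt_minimalPeriod f x, ?_⟩
    rw [ZMod.natCast_eq_one_iff_odd.mpr hodd]
    exact (by decide : ∀ b c : ZMod 2, b ≠ c → c + 1 = b) b c hbc

def orbitsFst : Orbits (flipLift f) → Orbits f :=
  Quotient.map' Prod.fst fun p q h => by
    obtain ⟨m, hm⟩ := orbitRel_zpowers_iff.mp h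
    exact orbitRel_zpowers_iff.mpr ⟨m, by rw [← hm, flipLift_pow_apply]⟩

theorem card_fiber_orbitsFst (q : Orbits f) :
    Nat.card {O // orbitsFst f O = q} = if Odd (minimalPeriod f q.out) then 1 else 2 := by
  let g : ZMod 2 → {O // orbitsFst f O = q} := fun b => ⟨Quotient.mk'' (q.out, b), q.out_eq'⟩
  have hg : Surjective g := by
    rintro ⟨O, hO⟩
    induction O using Quotient.inductionOn' with | h p => ?_
    obtain ⟨m, hm⟩ := orbitRel_zpowers_iff.mp (Quotient.exact' (hO.trans q.out_eq'.symm))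
    refine ⟨p.2 - m, Subtype.ext (Quotient.sound' ?_).symm⟩
    exact (orbitRel_flipLift_iff f).mpr ⟨m, hm, sub_add_cancel _ _⟩
  have hg_eq (b c : ZMod 2) : g b = g c ↔ b = c ∨ Odd (minimalPeriod f q.out) := by
    rw [← orbitRel_flipLift_iff_of_fst_eq, Subtype.ext_iff]
    exact Quotient.eq''
  split_ifs with hodd
  · refine Nat.card_eq_one_iff_exists.mpr ⟨g 0, fun O => ?_⟩
    obtain ⟨b, rfl⟩ := hg O
    exact (hg_eq b 0).mpr (.inr hodd)
  · have hinj : Injective g := fun b c h => ((hg_eq b c).mp h).resolve_right hodd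
    rw [← Nat.card_congr (Equiv.ofBijective g ⟨hinj, hg⟩), Nat.card_zmod]

theorem card_orbits_flipLift_modEq : Nat.card (Orbits (flipLift f)) ≡ Nat.card α [MOD 2] := by
  classical
  have := Fintype.ofFinite (Orbits f)
  calc Nat.card (Orbits (flipLift f))
      = ∑ q : Orbits f, Nat.card {O // orbitsFst f O = q} := by
        rw [← Nat.card_sigma, Nat.card_congr (Equiv.sigmaFiberEquiv (orbitsFst f))]
    _ ≡ ∑ q : Orbits f, minimalPeriod f q.out [MOD 2] := by
        refine Nat.ModEq.sum fun q _ => ?_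
        rw [card_fiber_orbitsFst]
        split_ifs with hodd
        · exact (Nat.odd_iff.mp hodd).symm
        · exact (Nat.even_iff.mp (Nat.not_odd_iff_even.mp hodd)).symm
    _ = Nat.card α := (card_eq_sum_minimalPeriod f).symm

end Finite

end Equiv.Perm

theorem stmt_11 (n : ℕ) (ε : Fin n → ZMod 2) (π : Equiv.Perm (Fin n))
    (σ : Equiv.Perm (Fin n × ZMod 2))
    (hσ : ∀ p : Fin n × ZMod 2, σ p = (π p.1, p.2 + ε (π p.1)))
    (hε : ∀ i, ε i = 1) :
    Nat.card
        (MulAction.orbitRel.Quotient (Subgroup.zpowers σ) (Fin n × ZMod 2))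
      ≡ n [MOD 2] := by
  obtain rfl : σ = π.flipLift := Equiv.ext fun p => by simp [hσ, hε]
  simpa only [Nat.card_eq_fintype_card, Fintype.card_fin] using π.card_orbits_flipLift_modEq
end

section
/- For every n ≥ 2, the symmetric group S_n contains a subgroup of even permutations of order 2^(⌊n/2⌋−1) · (⌊n/2⌋)!; that is, the alternating group A_n has a subgroup of this order. -/
open Equiv Equiv.Perm

private def Psi (m : ℕ) (f : Fin m → Perm (Fin 2)) (σ : Perm (Fin m)) :
    Perm (Fin 2 × Fin m) :=
  (Equiv.prodCongrLeft f).trans (Equiv.prodCongr (Equiv.refl (Fin 2)) σ)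

private lemma Psi_apply (m : ℕ) (f : Fin m → Perm (Fin 2)) (σ : Perm (Fin m))
    (x : Fin 2) (i : Fin m) : Psi m f σ (x, i) = (f i x, σ i) := rfl

private lemma Psi_mul (m : ℕ) (f g : Fin m → Perm (Fin 2)) (σ τ : Perm (Fin m)) :
    Psi m f σ * Psi m g τ = Psi m (fun i => f (τ i) * g i) (σ * τ) := by
  ext ⟨x, i⟩ <;> simp [Psi_apply, Equiv.Perm.mul_apply]

private lemma Psi_one (m : ℕ) : Psi m 1 1 = 1 := by
  ext ⟨x, i⟩ <;> simp [Psi_apply]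

private def Hgrp (m : ℕ) : Subgroup (Perm (Fin 2 × Fin m)) where
  carrier := Set.range (fun p : (Fin m → Perm (Fin 2)) × Perm (Fin m) => Psi m p.1 p.2)
  one_mem' := ⟨(1, 1), Psi_one m⟩
  mul_mem' := by
    rintro a b ⟨⟨f, σ⟩, rfl⟩ ⟨⟨g, τ⟩, rfl⟩
    exact ⟨(fun i => f (τ i) * g i, σ * τ), (Psi_mul m f g σ τ).symm⟩
  inv_mem' := by
    rintro a ⟨⟨f, σ⟩, rfl⟩
    refine ⟨(fun i => (f (σ⁻¹ i))⁻¹, σ⁻¹), ?_⟩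
    have h : Psi m f σ * Psi m (fun i => (f (σ⁻¹ i))⁻¹) σ⁻¹ = 1 := by
      rw [Psi_mul]
      convert Psi_one m using 2
      · funext i; simp
      · simp
    show Psi m (fun i => (f (σ⁻¹ i))⁻¹) σ⁻¹ = (Psi m f σ)⁻¹
    exact eq_inv_of_mul_eq_one_right h

private lemma Psi_injective (m : ℕ) :
    Function.Injective (fun p : (Fin m → Perm (Fin 2)) × Perm (Fin m) => Psi m p.1 p.2) := by
  rintro ⟨f, σ⟩ ⟨g, τ⟩ h
  have h' : ∀ (x : Fin 2) (i : Fin m), ((f i x : Fin 2), σ i) = (g i x, τ i) := by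
    intro x i
    have := congrArg (fun e : Perm (Fin 2 × Fin m) => e (x, i)) h
    simpa [Psi_apply] using this
  simp only [Prod.mk.injEq]
  constructor
  · funext i
    exact Equiv.ext fun x => (Prod.ext_iff.1 (h' x i)).1
  · exact Equiv.ext fun i => (Prod.ext_iff.1 (h' 0 i)).2

private lemma card_Hgrp (m : ℕ) : Nat.card (Hgrp m) = 2 ^ m * Nat.factorial m := by
  have e : ((Fin m → Perm (Fin 2)) × Perm (Fin m)) ≃ (Hgrp m) :=
    Equiv.ofInjective _ (Psi_injective m)
  rw [← Nat.card_congr e]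
  simp [Nat.card_eq_fintype_card, Fintype.card_perm]

set_option maxHeartbeats 1000000 in
theorem stmt_16 (n : ℕ) (hn : 2 ≤ n) :
    ∃ K : Subgroup (Equiv.Perm (Fin n)),
      (∀ g ∈ K, Equiv.Perm.sign g = 1) ∧
      Nat.card K = 2 ^ (n / 2 - 1) * Nat.factorial (n / 2) := by
  classical
  set m := n / 2 with hm
  have hm1 : 1 ≤ m := Nat.le_div_iff_mul_le (by norm_num) |>.2 (by omega)
  have hcard : Fintype.card (Fin 2 × Fin m) ≤ Fintype.card (Fin n) := by
    simp only [Fintype.card_prod, Fintype.card_fin]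
    omega
  obtain ⟨ι⟩ := Function.Embedding.nonempty_of_card_le hcard
  have hφinj : Function.Injective (Equiv.Perm.viaEmbeddingHom ι) :=
    Equiv.Perm.viaEmbeddingHom_injective ι
  set G' : Subgroup (Perm (Fin n)) := (Hgrp m).map (Equiv.Perm.viaEmbeddingHom ι) with hG'
  have hcardG' : Nat.card G' = 2 ^ m * Nat.factorial m := by
    rw [← card_Hgrp m]
    exact Nat.card_congr
      ((Hgrp m).equivMapOfInjective (Equiv.Perm.viaEmbeddingHom ι) hφinj).symm.toEquiv
  set s : G' →* ℤˣ := Equiv.Perm.sign.comp G'.subtype with hs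
  set i0 : Fin m := ⟨0, hm1⟩ with hi0
  set t : Perm (Fin 2 × Fin m) := Equiv.swap (0, i0) (1, i0) with ht
  have htmem : t ∈ Hgrp m := by
    refine ⟨(fun i => if i = i0 then Equiv.swap 0 1 else 1, 1), ?_⟩
    ext ⟨x, i⟩
    · by_cases h : i = i0
      · subst h
        fin_cases x <;> simp [Psi_apply, ht, Equiv.swap_apply_def]
      · simp only [Psi_apply, if_neg h, ht]
        rw [Equiv.swap_apply_of_ne_of_ne (by simp [Ne, Prod.ext_iff, h])
          (by simp [Ne, Prod.ext_iff, h])]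
        simp
    · by_cases h : i = i0
      · subst h
        fin_cases x <;> simp [Psi_apply, ht, Equiv.swap_apply_def]
      · simp only [Psi_apply, if_neg h, ht]
        rw [Equiv.swap_apply_of_ne_of_ne (by simp [Ne, Prod.ext_iff, h])
          (by simp [Ne, Prod.ext_iff, h])]
        simp
  have htsign : Equiv.Perm.sign (Equiv.Perm.viaEmbeddingHom ι t) = -1 := by
    have h1 : Equiv.Perm.sign (Equiv.Perm.viaEmbeddingHom ι t) = Equiv.Perm.sign t := by
      rw [Equiv.Perm.viaEmbeddingHom_apply]
      unfold Equiv.Perm.viaEmbedding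
      convert Equiv.Perm.sign_extendDomain t (Equiv.ofInjective ι.1 ι.2) using 2
      congr!
    rw [h1, ht, Equiv.Perm.sign_swap]
    simp [Prod.ext_iff]
  have hssurj : Function.Surjective s := by
    intro u
    rcases Int.units_eq_one_or u with rfl | rfl
    · exact ⟨1, map_one s⟩
    · exact ⟨⟨Equiv.Perm.viaEmbeddingHom ι t, ⟨t, htmem, rfl⟩⟩, htsign⟩
  refine ⟨s.ker.map G'.subtype, ?_, ?_⟩
  · rintro g ⟨x, hx, rfl⟩
    exact hx
  · have hinj : Function.Injective G'.subtype := G'.subtype_injective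
    have h1 : Nat.card (s.ker.map G'.subtype) = Nat.card s.ker :=
      Nat.card_congr (s.ker.equivMapOfInjective G'.subtype hinj).symm.toEquiv
    have h2 : Nat.card G' = 2 * Nat.card s.ker := by
      rw [Subgroup.card_eq_card_quotient_mul_card_subgroup s.ker]
      congr 1
      rw [Nat.card_congr (QuotientGroup.quotientKerEquivOfSurjective s hssurj).toEquiv,
        Nat.card_eq_fintype_card, Fintype.card_units_int]
    rw [h1]
    have h3 : 2 * Nat.card s.ker = 2 * (2 ^ (m - 1) * Nat.factorial m) := by
      rw [← h2, hcardG', ← mul_assoc, ← pow_succ']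
      congr 2
      omega
    omega
end

section
/- Let π ∈ S_n be a single n-cycle and (ε, π) ∈ Z/2 ≀ S_n with ∑ᵢ εᵢ = 0 in Z/2. Then the image σ on Fin n × Z/2 decomposes into exactly two orbits, each of size n. -/
theorem stmt_19 (n : ℕ) (ε : Fin n → ZMod 2) (π : Equiv.Perm (Fin n))
    (hπ : π.IsCycle ∧ π.support.card = n)
    (hε : ∑ i, ε i = 0)
    (σ : Equiv.Perm (Fin n × ZMod 2))
    (hσ : ∀ p : Fin n × ZMod 2, σ p = (π p.1, p.2 + ε (π p.1))) :
    Nat.card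
        (MulAction.orbitRel.Quotient (Subgroup.zpowers σ) (Fin n × ZMod 2))
      = 2 ∧
    ∀ p : Fin n × ZMod 2,
      Nat.card (MulAction.orbit (Subgroup.zpowers σ) p) = n := by
  classical
  obtain ⟨hc, hcard⟩ := hπ
  have hord : orderOf π = n := hc.orderOf.trans hcard
  have hn : 0 < n := by
    rcases hc with ⟨x, hx, -⟩
    rw [← hcard]
    exact Finset.card_pos.2 ⟨x, Equiv.Perm.mem_support.2 hx⟩
  have hsupp : π.support = Finset.univ := by
    apply Finset.eq_univ_of_card
    simpa using hcard
  have hnofix : ∀ i : Fin n, π i ≠ i := fun i =>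
    Equiv.Perm.mem_support.1 (hsupp ▸ Finset.mem_univ i)
  have hπn : π ^ n = 1 := by
    have h := pow_orderOf_eq_one π
    rwa [hord] at h
  -- minimal period of π at every point is n
  have hmp : ∀ i : Fin n, Function.minimalPeriod (⇑π) i = n := by
    intro i
    have hper : Function.IsPeriodicPt (⇑π) n i := by
      show (⇑π)^[n] i = i
      rw [Equiv.Perm.iterate_eq_pow, hπn]; rfl
    have hdvd : Function.minimalPeriod (⇑π) i ∣ n :=
      hper.minimalPeriod_dvd
    have hpos : 0 < Function.minimalPeriod (⇑π) i :=
      hper.minimalPeriod_pos hn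
    have hfix : (π ^ Function.minimalPeriod (⇑π) i) i = i := by
      have := Function.iterate_minimalPeriod (f := ⇑π) (x := i)
      rwa [Equiv.Perm.iterate_eq_pow] at this
    have h1 : π ^ Function.minimalPeriod (⇑π) i = 1 :=
      (hc.pow_eq_one_iff' (hnofix i)).2 hfix
    have hdvd2 : n ∣ Function.minimalPeriod (⇑π) i := by
      have h2 := orderOf_dvd_of_pow_eq_one h1
      rwa [hord] at h2
    exact Nat.dvd_antisymm hdvd hdvd2
  -- formula for powers of σ
  have key : ∀ (k : ℕ) (p : Fin n × ZMod 2),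
      (σ ^ k) p = ((π ^ k) p.1,
        p.2 + ∑ j ∈ Finset.range k, ε ((π ^ (j + 1)) p.1)) := by
    intro k
    induction k with
    | zero => intro p; simp
    | succ k ih =>
      intro p
      rw [pow_succ' σ k, Equiv.Perm.mul_apply, ih, hσ]
      simp only [Finset.sum_range_succ]
      refine Prod.ext ?_ ?_
      · simp [pow_succ' π k, Equiv.Perm.mul_apply]
      · simp only []
        rw [add_assoc]
        congr 2
        simp [pow_succ' π k, Equiv.Perm.mul_apply]
  -- the sum over a full cycle vanishes
  have hsum : ∀ i : Fin n, ∑ j ∈ Finset.range n, ε ((π ^ (j + 1)) i) = 0 := by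
    intro i
    have h1 : ∀ j : ℕ, (π ^ (j + 1)) i = (π ^ j) (π i) := by
      intro j; rw [pow_succ π j]; rfl
    simp only [h1]
    set i' := π i with hi'
    have hinj : Function.Injective (fun j : Fin n => (π ^ (j : ℕ)) i') := by
      intro a b hab
      have ha : (a : ℕ) ∈ Set.Iio (Function.minimalPeriod (⇑π) i') := by
        rw [hmp i']; exact a.isLt
      have hb : (b : ℕ) ∈ Set.Iio (Function.minimalPeriod (⇑π) i') := by
        rw [hmp i']; exact b.isLt
      have : (⇑π)^[(a : ℕ)] i' = (⇑π)^[(b : ℕ)] i' := by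
        rw [Equiv.Perm.iterate_eq_pow, Equiv.Perm.iterate_eq_pow]
        exact hab
      exact Fin.ext (Function.iterate_injOn_Iio_minimalPeriod ha hb this)
    have hbij : Function.Bijective (fun j : Fin n => (π ^ (j : ℕ)) i') :=
      Finite.injective_iff_bijective.1 hinj
    calc ∑ j ∈ Finset.range n, ε ((π ^ j) i')
        = ∑ j : Fin n, ε ((π ^ (j : ℕ)) i') := by
          rw [Finset.sum_range fun j => ε ((π ^ j) i')]
      _ = ∑ x : Fin n, ε x := Equiv.sum_comp (Equiv.ofBijective _ hbij) ε
      _ = 0 := hε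
  -- σ ^ n = 1 pointwise
  have hσn : ∀ p : Fin n × ZMod 2, (σ ^ n) p = p := by
    intro p
    rw [key n p, hπn, hsum p.1]
    simp
  -- minimal period of σ at every point is n
  have hmpσ : ∀ p : Fin n × ZMod 2,
      Function.minimalPeriod (fun q => σ • q) p = n := by
    intro p
    have hfun : (fun q : Fin n × ZMod 2 => σ • q) = ⇑σ := by
      funext q; rfl
    rw [hfun]
    have hper : Function.IsPeriodicPt (⇑σ) n p := by
      show (⇑σ)^[n] p = p
      rw [Equiv.Perm.iterate_eq_pow]
      exact hσn p
    have hdvd : Function.minimalPeriod (⇑σ) p ∣ n := hper.minimalPeriod_dvd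
    have hpos : 0 < Function.minimalPeriod (⇑σ) p := hper.minimalPeriod_pos hn
    have hfix : (σ ^ Function.minimalPeriod (⇑σ) p) p = p := by
      have := Function.iterate_minimalPeriod (f := ⇑σ) (x := p)
      rwa [Equiv.Perm.iterate_eq_pow] at this
    have hfix1 : (π ^ Function.minimalPeriod (⇑σ) p) p.1 = p.1 := by
      have := congrArg Prod.fst hfix
      rwa [key] at this
    have hperπ : Function.IsPeriodicPt (⇑π) (Function.minimalPeriod (⇑σ) p)
        p.1 := by
      show (⇑π)^[_] p.1 = p.1
      rw [Equiv.Perm.iterate_eq_pow]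
      exact hfix1
    have hdvd2 : n ∣ Function.minimalPeriod (⇑σ) p := by
      have h2 := hperπ.minimalPeriod_dvd
      rwa [hmp p.1] at h2
    exact Nat.dvd_antisymm hdvd hdvd2
  -- orbit sizes
  have horb : ∀ p : Fin n × ZMod 2,
      Nat.card (MulAction.orbit (Subgroup.zpowers σ) p) = n := by
    intro p
    rw [Nat.card_congr (MulAction.orbitZPowersEquiv σ p)]
    rw [hmpσ p, Nat.card_zmod]
  refine ⟨?_, horb⟩
  have hΩ : Finite (MulAction.orbitRel.Quotient (Subgroup.zpowers σ)
      (Fin n × ZMod 2)) := Quotient.finite _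
  letI : Fintype (MulAction.orbitRel.Quotient (Subgroup.zpowers σ)
      (Fin n × ZMod 2)) := Fintype.ofFinite _
  letI : ∀ ω : MulAction.orbitRel.Quotient (Subgroup.zpowers σ)
      (Fin n × ZMod 2),
      Fintype (MulAction.orbit (Subgroup.zpowers σ) ω.out) :=
    fun ω => Fintype.ofFinite _
  have e := MulAction.selfEquivSigmaOrbits (Subgroup.zpowers σ)
    (Fin n × ZMod 2)
  have hcount : Fintype.card (Fin n × ZMod 2) =
      ∑ ω : MulAction.orbitRel.Quotient (Subgroup.zpowers σ)
        (Fin n × ZMod 2),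
        Fintype.card (MulAction.orbit (Subgroup.zpowers σ) ω.out) :=
    (Fintype.card_congr e).trans (Fintype.card_sigma)
  have horb' : ∀ ω : MulAction.orbitRel.Quotient (Subgroup.zpowers σ)
      (Fin n × ZMod 2),
      Fintype.card (MulAction.orbit (Subgroup.zpowers σ) ω.out) = n := by
    intro ω
    rw [← Nat.card_eq_fintype_card]
    exact horb _
  rw [Finset.sum_congr rfl (fun ω _ => horb' ω), Finset.sum_const,
    Finset.card_univ, smul_eq_mul, Fintype.card_prod, Fintype.card_fin,
    ZMod.card 2] at hcount
  have h2 : Fintype.card (MulAction.orbitRel.Quotient (Subgroup.zpowers σ)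
      (Fin n × ZMod 2)) * n = 2 * n := by omega
  have h3 := Nat.eq_of_mul_eq_mul_right hn h2
  rw [Nat.card_eq_fintype_card]
  exact h3
end
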